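/- arXiv:math/0410321 — 4 statements merged into one kernel-verified Lean document; each statement's English description precedes it below -/
import Mathlib

section
/- Let F be a nonabelian free group. Then every nontrivial finitely generated normal subgroup of F has finite index in F. -/
/-!
If the alphabet is infinite, the letters occurring in `N` form a finite set (since `N` is
finitely generated), and conjugating a nontrivial element of `N` by a fresh letter yields an
element of `N` containing that letter; so `N = ⊥`.

If the alphabet is finite, let `M` bound the lengths of generators of `N` and let `w ∈ N` be
nontrivial and cyclically reduced. Let `g` be a shortest element of its coset `g N`. One of
`w, w⁻¹`, say `v`, can be appended to `g` without cancellation, and `v` is not a suffix of `g`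
(by minimality), so the reduced word of `g v g⁻¹ ∈ N` begins with `g`. Writing `g v g⁻¹` as a
product of elements of `N` of length `≤ M`, some partial product `p ∈ N` lies within distance
`M` of `g`, and `p⁻¹ g ∈ g N` forces `|g| ≤ M`. There are finitely many words of length `≤ M`.
-/

namespace FreeGroup

open List

variable {α : Type*} [DecidableEq α]

theorem exists_reduce_append_eq {L₁ L₂ : List (α × Bool)} (h₁ : IsReduced L₁)
    (h₂ : IsReduced L₂) :
    ∃ A B C, L₁ = A ++ C ∧ L₂ = invRev C ++ B ∧ reduce (L₁ ++ L₂) = A ++ B := by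
  induction L₁ with
  | nil => exact ⟨[], L₂, [], rfl, by simp [invRev], h₂.reduce_eq⟩
  | cons a L ih =>
    obtain ⟨A, B, C, rfl, rfl, hred⟩ := ih (h₁.infix ⟨[a], [], by simp⟩)
    have hAB : IsReduced (A ++ B) := hred ▸ .of_reduce_eq reduce.idem
    rw [cons_append, ← reduce_cons_reduce, hred]
    rcases A with _ | ⟨a', A⟩
    · rcases B with _ | ⟨b, B⟩
      · exact ⟨[a], [], C, rfl, by simp, rfl⟩
      replace hAB : IsReduced (b :: B) := hAB
      by_cases hab : a.1 = b.1 ∧ a.2 = !b.2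
      · have hb : b = (a.1, !a.2) := by simp [hab]
        refine ⟨[], B, a :: C, rfl, by simp [invRev, hb], ?_⟩
        rw [reduce.cons, nil_append, hAB.reduce_eq]
        simp [hab]
      · refine ⟨[a], b :: B, C, rfl, rfl, ?_⟩
        rw [reduce.cons, nil_append, hAB.reduce_eq]
        simp [hab]
    · refine ⟨a :: a' :: A, B, C, rfl, rfl, IsReduced.reduce_eq ?_⟩
      exact isReduced_cons_cons.2 ⟨(isReduced_cons_cons.1 h₁).1, hAB⟩

theorem exists_toWord_mul_eq (x y : FreeGroup α) :
    ∃ A B C, x.toWord = A ++ C ∧ y.toWord = invRev C ++ B ∧ (x * y).toWord = A ++ B := by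
  rw [toWord_mul]
  exact exists_reduce_append_eq isReduced_toWord isReduced_toWord

theorem toWord_mul_of_isReduced {x y : FreeGroup α} (h : IsReduced (x.toWord ++ y.toWord)) :
    (x * y).toWord = x.toWord ++ y.toWord := by
  rw [toWord_mul, h.reduce_eq]

theorem toWord_prefix_toWord_mul_mul_inv {g v : FreeGroup α}
    (hred : IsReduced (g.toWord ++ v.toWord)) (hsuf : ¬ v.toWord <:+ g.toWord) :
    g.toWord <+: (g * v * g⁻¹).toWord := by
  obtain ⟨A, B, C, hgv, hg, hprod⟩ := exists_toWord_mul_eq (g * v) g⁻¹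
  rw [toWord_mul_of_isReduced hred] at hgv
  rw [toWord_inv] at hg
  have hCg : C <:+ g.toWord :=
    ⟨invRev B, by simpa [invRev_append] using (congrArg invRev hg).symm⟩
  have hlen := congrArg length hgv
  simp only [length_append] at hlen
  rw [hprod]
  by_cases hCv : C.length ≤ v.toWord.length
  · have hgA : g.toWord <+: A :=
      prefix_of_prefix_length_le (hgv ▸ prefix_append _ _) (prefix_append A C) (by omega)
    exact hgA.trans (prefix_append A B)
  · have hvC : v.toWord <:+ C :=
      suffix_of_suffix_length_le (hgv ▸ suffix_append _ _) (suffix_append A C) (by omega)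
    exact absurd (hvC.trans hCg) hsuf

theorem exists_prefix_norm_inv_prod_mul_le {M : ℕ} {l : List (FreeGroup α)}
    (hl : ∀ s ∈ l, s.norm ≤ M) {p : List (α × Bool)} (hp : p <+: l.prod.toWord) :
    ∃ l', l' <+: l ∧ (l'.prod⁻¹ * mk p).norm ≤ M := by
  induction l using List.reverseRecOn generalizing p with
  | nil =>
    obtain rfl : p = [] := by simpa using hp
    exact ⟨[], prefix_refl _, by simp [← one_eq_mk]⟩
  | append_singleton l s ih =>
    obtain ⟨A, B, C, hl₀, hs, hprod⟩ := exists_toWord_mul_eq l.prod s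
    rw [prod_append, prod_singleton, hprod] at hp
    rcases prefix_or_prefix_of_prefix hp (prefix_append A B) with hpA | ⟨t, rfl⟩
    · obtain ⟨l', hl', hnorm⟩ :=
        ih (fun s hs => hl s (mem_append_left _ hs)) (hl₀ ▸ hpA.trans (prefix_append A C))
      exact ⟨l', hl'.trans (prefix_append _ _), hnorm⟩
    refine ⟨l, prefix_append _ _, ?_⟩
    have hsplit : l.prod⁻¹ * mk (A ++ t) = (mk C)⁻¹ * mk t := by
      rw [← mk_toWord (x := l.prod), hl₀, ← mul_mk, ← mul_mk]; group
    have ht : t.length ≤ B.length := ((prefix_append_right_inj A).1 hp).length_le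
    calc (l.prod⁻¹ * mk (A ++ t)).norm ≤ C.length + t.length := by
          rw [hsplit]
          exact (norm_mul_le _ _).trans
            (add_le_add (norm_inv_eq.trans_le norm_mk_le) norm_mk_le)
      _ ≤ s.norm := by
          simp only [norm, hs, length_append, invRev_length]; omega
      _ ≤ M := hl s (mem_append_right _ (mem_singleton_self s))

theorem exists_mem_ne_one_isCyclicallyReduced (N : Subgroup (FreeGroup α)) [N.Normal]
    (hN : N ≠ ⊥) : ∃ w ∈ N, w ≠ 1 ∧ IsCyclicallyReduced w.toWord := by
  obtain ⟨u, huN, hu⟩ := N.bot_or_exists_ne_one.resolve_left hN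
  set K := reduceCyclically.conjugator u.toWord
  set R := reduceCyclically u.toWord
  have hR : IsCyclicallyReduced R := reduceCyclically.isCyclicallyReduced isReduced_toWord
  have hu_eq : u = mk K * mk R * (mk K)⁻¹ := by
    rw [inv_mk, mul_mk, mul_mk, reduceCyclically.conj_conjugator_reduceCyclically, mk_toWord]
  refine ⟨mk R, ?_, ?_, by rwa [toWord_mk, hR.isReduced.reduce_eq]⟩
  · convert Subgroup.Normal.conj_mem ‹_› u huN (mk K)⁻¹ using 1
    rw [hu_eq]; group
  · intro h
    exact hu (by rw [hu_eq, h, mul_one, mul_inv_cancel])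

theorem isReduced_toWord_append_or {w : FreeGroup α} (hw : IsCyclicallyReduced w.toWord)
    (g : FreeGroup α) :
    IsReduced (g.toWord ++ w.toWord) ∨ IsReduced (g.toWord ++ w⁻¹.toWord) := by
  refine or_iff_not_imp_left.2 fun hgw =>
    isChain_append.2 ⟨isReduced_toWord, isReduced_toWord, ?_⟩
  obtain ⟨x, hx, b, hb, hxb, hxb'⟩ : ∃ x ∈ g.toWord.getLast?, ∃ b ∈ w.toWord.head?,
      x.1 = b.1 ∧ x.2 ≠ b.2 := by
    by_contra! h
    exact hgw (isChain_append.2 ⟨isReduced_toWord, isReduced_toWord, h⟩)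
  intro x' hx' y hy hxy
  obtain rfl : x' = x := Option.mem_unique hx' hx
  rw [toWord_inv, invRev, head?_reverse, getLast?_map] at hy
  obtain ⟨a, ha, rfl⟩ := Option.mem_map.1 hy
  have hab : a.2 = b.2 := hw.2 a ha b hb (hxy.symm.trans hxb)
  simpa [hab, Bool.eq_not] using hxb'

theorem exists_le_closure_setOf_norm_le {N : Subgroup (FreeGroup α)} (hN : N.FG) :
    ∃ M, N.toSubmonoid ≤ Submonoid.closure {x | x ∈ N ∧ x.norm ≤ M} := by
  obtain ⟨S, hS⟩ := (Subgroup.fg_iff_submonoid_fg N).1 hN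
  refine ⟨S.sup norm, hS ▸ Submonoid.closure_mono fun s hs => ⟨?_, Finset.le_sup hs⟩⟩
  rw [← SetLike.mem_coe, ← Subgroup.coe_toSubmonoid, ← hS]
  exact Submonoid.subset_closure hs

theorem norm_le_of_forall_norm_le_norm_mul {N : Subgroup (FreeGroup α)} [N.Normal] {M : ℕ}
    (hM : N.toSubmonoid ≤ Submonoid.closure {x | x ∈ N ∧ x.norm ≤ M})
    {w : FreeGroup α} (hwN : w ∈ N) (hw : w ≠ 1) (hwc : IsCyclicallyReduced w.toWord)
    {g : FreeGroup α} (hg : ∀ n ∈ N, g.norm ≤ (g * n).norm) : g.norm ≤ M := by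
  obtain ⟨v, hvN, hv, hred⟩ : ∃ v ∈ N, v ≠ 1 ∧ IsReduced (g.toWord ++ v.toWord) :=
    (isReduced_toWord_append_or hwc g).elim (⟨w, hwN, hw, ·⟩)
      (⟨w⁻¹, inv_mem hwN, inv_ne_one.2 hw, ·⟩)
  have hsuf : ¬ v.toWord <:+ g.toWord := by
    rintro ⟨P, hP⟩
    have hgv : g * v⁻¹ = mk P := by
      rw [← mk_toWord (x := g), ← hP, ← mul_mk, mk_toWord]; group
    have hlen : P.length < g.norm := by
      have := length_pos_iff.2 (mt toWord_eq_nil_iff.1 hv)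
      rw [norm, ← hP, length_append]
      omega
    exact absurd ((hg _ (inv_mem hvN)).trans (hgv ▸ norm_mk_le)) (not_le.2 hlen)
  obtain ⟨l, hl, hprod⟩ := Submonoid.exists_list_of_mem_closure
    (hM (Subgroup.Normal.conj_mem ‹_› v hvN g))
  obtain ⟨l', hl', hnorm⟩ := exists_prefix_norm_inv_prod_mul_le (fun s hs => (hl s hs).2)
    (hprod ▸ toWord_prefix_toWord_mul_mul_inv hred hsuf)
  have hl'N : l'.prod ∈ N := N.list_prod_mem fun s hs => (hl s (hl'.subset hs)).1
  calc g.norm ≤ (g * (g⁻¹ * l'.prod⁻¹ * g)).norm :=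
        hg _ (by simpa using Subgroup.Normal.conj_mem ‹_› _ (inv_mem hl'N) g⁻¹)
    _ = (l'.prod⁻¹ * mk g.toWord).norm := by rw [mk_toWord]; group
    _ ≤ M := hnorm

theorem finite_setOf_norm_le [Finite α] (M : ℕ) : {x : FreeGroup α | x.norm ≤ M}.Finite :=
  (List.finite_length_le _ M).preimage toWord_injective.injOn

theorem finiteIndex_of_forall_norm_le [Finite α] (N : Subgroup (FreeGroup α)) (M : ℕ)
    (hM : ∀ g : FreeGroup α, (∀ n ∈ N, g.norm ≤ (g * n).norm) → g.norm ≤ M) :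
    N.FiniteIndex := by
  suffices Finite (FreeGroup α ⧸ N) from Subgroup.finiteIndex_of_finite_quotient
  refine Set.finite_univ_iff.1 (((finite_setOf_norm_le M).image QuotientGroup.mk).subset ?_)
  intro q _
  have hq : {g : FreeGroup α | (g : FreeGroup α ⧸ N) = q}.Nonempty :=
    QuotientGroup.mk_surjective q
  set g := Function.argminOn norm _ hq
  have hgq : (g : FreeGroup α ⧸ N) = q := Function.argminOn_mem norm _ hq
  refine ⟨g, hM g fun n hn => Function.argminOn_le norm _ ?_, hgq⟩
  show ((g * n : FreeGroup α) : FreeGroup α ⧸ N) = q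
  rw [QuotientGroup.mk_mul_of_mem g hn, hgq]

def wordSupportedIn (U : Set α) : Subgroup (FreeGroup α) where
  carrier := {x | ∀ p ∈ x.toWord, p.1 ∈ U}
  one_mem' := by simp
  mul_mem' hx hy p hp := (mem_append.1 ((toWord_mul_sublist _ _).subset hp)).elim (hx p) (hy p)
  inv_mem' {x} hx p hp := by
    rw [toWord_inv, invRev, mem_reverse, mem_map] at hp
    obtain ⟨q, hq, rfl⟩ := hp
    exact hx q hq

theorem exists_finset_le_wordSupportedIn {N : Subgroup (FreeGroup α)} (hN : N.FG) :
    ∃ U : Finset α, N ≤ wordSupportedIn U := by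
  obtain ⟨S, rfl⟩ := hN
  refine ⟨S.biUnion fun s => (s.toWord.map Prod.fst).toFinset, Subgroup.closure_le _ |>.2 ?_⟩
  intro s hs p hp
  simp only [Finset.coe_biUnion, Set.mem_iUnion, Finset.mem_coe, List.coe_toFinset]
  exact ⟨s, hs, mem_map_of_mem hp⟩

theorem eq_bot_of_fg_of_infinite [Infinite α] (N : Subgroup (FreeGroup α)) [N.Normal]
    (hN : N.FG) : N = ⊥ := by
  obtain ⟨U, hU⟩ := exists_finset_le_wordSupportedIn hN
  obtain ⟨t, ht⟩ := Infinite.exists_notMem_finset U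
  refine (Subgroup.eq_bot_iff_forall N).2 fun u hu => by_contra fun hu1 => ht ?_
  have hred : IsReduced ((of t).toWord ++ u.toWord) := by
    rw [toWord_of, singleton_append]
    rcases hw : u.toWord with _ | ⟨b, L⟩
    · exact .singleton
    refine isReduced_cons_cons.2 ⟨fun htb => ?_, hw ▸ isReduced_toWord⟩
    exact absurd (hU hu b (hw ▸ mem_cons_self)) (by simpa [← htb] using ht)
  have hsuf : ¬ u.toWord <:+ (of t).toWord := by
    intro hsuf
    obtain ⟨p, hp⟩ := exists_mem_of_ne_nil _ (mt toWord_eq_nil_iff.1 hu1)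
    obtain rfl : p = (t, true) := by simpa [toWord_of] using hsuf.subset hp
    exact ht (hU hu _ hp)
  have hconj := hU (Subgroup.Normal.conj_mem ‹_› u hu (of t))
  exact hconj (t, true)
    ((toWord_prefix_toWord_mul_mul_inv hred hsuf).subset (by simp [toWord_of]))

end FreeGroup

theorem stmt_0_general {α : Type*}
    (N : Subgroup (FreeGroup α)) [N.Normal] (hfg : N.FG) (hne : N ≠ ⊥) :
    N.FiniteIndex := by
  classical
  cases finite_or_infinite α
  case inr => exact absurd (FreeGroup.eq_bot_of_fg_of_infinite N hfg) hne
  obtain ⟨w, hwN, hw, hwc⟩ := FreeGroup.exists_mem_ne_one_isCyclicallyReduced N hne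
  obtain ⟨M, hM⟩ := FreeGroup.exists_le_closure_setOf_norm_le hfg
  exact FreeGroup.finiteIndex_of_forall_norm_le N M fun g hg =>
    FreeGroup.norm_le_of_forall_norm_le_norm_mul hM hwN hw hwc hg

/-- Greenberg: every nontrivial finitely generated normal subgroup of a
nonabelian free group has finite index. -/
theorem stmt_0 {α : Type*} [Nontrivial α]
    (N : Subgroup (FreeGroup α)) [N.Normal] (hfg : N.FG) (hne : N ≠ ⊥) :
    N.FiniteIndex :=
  stmt_0_general N hfg hne
end

section
/- Finitely generated free groups are Hopfian: every surjective endomorphism of a free group of finite rank is an isomorphism. -/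
/-!
A reduced word `w = x₀ x₁ ⋯ x_{L-1}` of length `L > 0` can be traced in a finite permutation
group: let each generator `a` act on the points `0, …, L` so that the letter `x_k` moves `k + 1`
to `k`. Reducedness says adjacent letters never cancel, which is exactly what makes these
prescriptions injective, so they extend to permutations; then `w` moves `L` to `0` and is not the
identity. Hence free groups are residually finite. A finitely generated group has only finitely
many homomorphisms to a finite group `Q`, so precomposition with a surjective endomorphism `φ`,
being injective on `G →* Q`, is bijective: every `G →* Q` factors through `φ`, hence kills
`ker φ`. Residual finiteness then forces `ker φ = 1`.
-/

open Function

theorem Equiv.Perm.exists_apply_eq_of_injective {X K : Type*} [Finite X] {src tgt : K → X}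
    (hsrc : Injective src) (htgt : Injective tgt) :
    ∃ σ : Equiv.Perm X, ∀ k, σ (src k) = tgt k := by
  classical
  have := Fintype.ofFinite X
  rcases isEmpty_or_nonempty K with hK | hK
  · exact ⟨1, isEmptyElim⟩
  have hinv : ∀ k, invFun src (src k) = k := leftInverse_invFun hsrc
  have hinj : Set.InjOn (tgt ∘ invFun src) (Set.range src) := by
    rintro _ ⟨k, rfl⟩ _ ⟨k', rfl⟩ h
    simp only [comp_apply, hinv] at h
    rw [htgt h]
  obtain ⟨g, hg⟩ := Set.MapsTo.exists_equiv_extend_of_card_eq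
    (t := Finset.univ) Finset.card_univ.symm (by simp [Set.MapsTo]) hinj
  refine ⟨g.trans (Equiv.subtypeUnivEquiv Finset.mem_univ), fun k => ?_⟩
  simpa [hinv] using hg (src k) ⟨k, rfl⟩

theorem List.prod_apply_eq_of_forall_getElem_apply {X : Type*} (ps : List (Equiv.Perm X))
    (p : ℕ → X) (h : ∀ k (hk : k < ps.length), ps[k] (p (k + 1)) = p k) :
    ps.prod (p ps.length) = p 0 := by
  induction ps generalizing p with
  | nil => simp
  | cons σ ps ih =>
    have hps := ih (fun k => p (k + 1)) fun k hk => h (k + 1) (by simpa using hk)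
    simp only [List.prod_cons, Equiv.Perm.mul_apply, List.length_cons, hps]
    exact h 0 (by simp)

namespace FreeGroup

variable {α : Type*} {l : List (α × Bool)}

theorem IsReduced.getElem_snd_eq (hl : IsReduced l) {k k' : Fin l.length}
    (hkk' : k.succ = k'.castSucc) (h : l[k].1 = l[k'].1) : l[k].2 = l[k'].2 := by
  have hk' : (k' : ℕ) = k + 1 := by
    simp only [Fin.ext_iff, Fin.val_succ, Fin.val_castSucc] at hkk'
    omega
  simp only [Fin.getElem_fin, hk'] at h ⊢
  exact List.IsChain.getElem hl k (by omega) h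

theorem IsReduced.injective_cond_succ_castSucc (hl : IsReduced l) (a : α) (c : Bool) :
    Injective fun k : {k : Fin l.length // l[k].1 = a} =>
      cond (l[k.1].2 == c) k.1.succ k.1.castSucc := by
  rintro ⟨k, hk⟩ ⟨k', hk'⟩ h
  have hsame : l[k].1 = l[k'].1 := hk.trans hk'.symm
  simp only [Subtype.mk.injEq]
  cases hb : l[k].2 == c <;> cases hb' : l[k'].2 == c <;>
    simp only [hb, hb', cond_true, cond_false] at h
  · exact Fin.castSucc_injective _ h
  · have := hl.getElem_snd_eq h.symm hsame.symm
    rw [this, hb] at hb'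
    cases hb'
  · have := hl.getElem_snd_eq h hsame
    rw [this, hb'] at hb
    cases hb
  · exact Fin.succ_injective _ h

theorem IsReduced.exists_perm_walk (hl : IsReduced l) :
    ∃ σ : α → Equiv.Perm (Fin (l.length + 1)), ∀ k : Fin l.length,
      cond l[k].2 (σ l[k].1) (σ l[k].1)⁻¹ k.succ = k.castSucc := by
  have key (a : α) : ∃ σ : Equiv.Perm (Fin (l.length + 1)),
      ∀ k : {k : Fin l.length // l[k].1 = a},
        σ (cond (l[k.1].2 == true) k.1.succ k.1.castSucc) =
          cond (l[k.1].2 == false) k.1.succ k.1.castSucc :=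
    Equiv.Perm.exists_apply_eq_of_injective (hl.injective_cond_succ_castSucc a true)
      (hl.injective_cond_succ_castSucc a false)
  choose σ hσ using key
  refine ⟨σ, fun k => ?_⟩
  have := hσ _ ⟨k, rfl⟩
  cases hb : l[k].2 <;> simp only [hb] at this ⊢
  · exact Equiv.Perm.inv_eq_iff_eq.mpr this.symm
  · exact this

theorem IsReduced.exists_monoidHom_perm_mk_ne_one (hl : IsReduced l) (hne : l ≠ []) :
    ∃ ρ : FreeGroup α →* Equiv.Perm (Fin (l.length + 1)), ρ (mk l) ≠ 1 := by
  obtain ⟨σ, hσ⟩ := hl.exists_perm_walk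
  refine ⟨lift σ, fun h => ?_⟩
  have hwalk := List.prod_apply_eq_of_forall_getElem_apply
    (l.map fun x => cond x.2 (σ x.1) (σ x.1)⁻¹) (fun k => ⟨min k l.length, by omega⟩)
    fun k hk => by
      rw [List.length_map] at hk
      convert hσ ⟨k, hk⟩ using 2
      · simp
      · ext; simp; omega
      · simp; omega
  rw [← lift_mk, h] at hwalk
  simp [Fin.ext_iff, hne] at hwalk

theorem exists_monoidHom_perm_apply_ne_one {w : FreeGroup α} (hw : w ≠ 1) :
    ∃ (N : ℕ) (ρ : FreeGroup α →* Equiv.Perm (Fin N)), ρ w ≠ 1 := by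
  classical
  obtain ⟨ρ, hρ⟩ := isReduced_toWord.exists_monoidHom_perm_mk_ne_one (mt toWord_eq_nil_iff.mp hw)
  exact ⟨_, ρ, by rwa [mk_toWord] at hρ⟩

instance : Group.ResiduallyFinite (FreeGroup α) :=
  Group.residuallyFinite_iff_exists_finiteIndex.mpr fun _ hw =>
    let ⟨_, ρ, hρ⟩ := exists_monoidHom_perm_apply_ne_one hw
    ⟨ρ.ker, Subgroup.finiteIndex_ker ρ, by simpa using hρ⟩

end FreeGroup

theorem Group.FG.finite_monoidHom (G Q : Type*) [Group G] [Group.FG G] [Group Q] [Finite Q] :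
    Finite (G →* Q) := by
  obtain ⟨α, _, π, hπ⟩ := Group.fg_iff_exists_freeGroup_hom_surjective_finite.mp ‹Group.FG G›
  have : Finite (FreeGroup α →* Q) := .of_equiv _ FreeGroup.lift
  exact .of_injective (fun ψ : G →* Q => ψ.comp π) fun _ _ => (MonoidHom.cancel_right hπ).mp

theorem Group.ResiduallyFinite.injective_of_surjective_endomorphism {G : Type*} [Group G]
    [Group.FG G] [Group.ResiduallyFinite G] {φ : G →* G} (hφ : Surjective φ) : Injective φ := by
  refine (injective_iff_map_eq_one φ).mpr fun g hg => by_contra fun hg1 => ?_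
  obtain ⟨H, hgH⟩ := Group.exists_finiteIndexNormalSubgroup_notMem g hg1
  have := Group.FG.finite_monoidHom G (G ⧸ H.toSubgroup)
  have hprecomp : Injective fun ψ : G →* G ⧸ H.toSubgroup => ψ.comp φ :=
    fun _ _ => (MonoidHom.cancel_right hφ).mp
  obtain ⟨ψ, hψ⟩ := Finite.surjective_of_injective hprecomp (QuotientGroup.mk' H.toSubgroup)
  have : (g : G ⧸ H.toSubgroup) = 1 := by
    rw [← QuotientGroup.mk'_apply, ← hψ, MonoidHom.comp_apply, hg, map_one]
  exact hgH ((QuotientGroup.eq_one_iff g).mp this)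

/-- Finitely generated free groups are Hopfian. -/
theorem stmt_2 (n : ℕ) (φ : FreeGroup (Fin n) →* FreeGroup (Fin n))
    (hφ : Function.Surjective φ) : Function.Injective φ :=
  Group.ResiduallyFinite.injective_of_surjective_endomorphism hφ
end

section
/- Let G be a finitely generated group admitting a surjective homomorphism χ : G → ℤ with finitely generated kernel, and suppose the abelianization of G is isomorphic to ℤⁿ × T with T finite and n ≥ 2. Then there is no surjective homomorphism from G onto the free group F_n of rank n. (In the paper's language: a fibred 3-manifold group has co-rank strictly less than its first Betti number when that Betti number is at least 2.) -/
/-!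
A surjection `θ : G ↠ Fₙ` induces a surjection `ℤⁿ × T ≅ Gᵃᵇ ↠ Fₙᵃᵇ ≅ ℤⁿ`, which by Hopficity of
`ℤⁿ` has kernel `T`; as `ℤ` is torsion-free, `χ` kills `T`, so `χ = ψ ∘ θ` for some `ψ : Fₙ ↠ ℤ`,
and `ker ψ = θ (ker χ)` is finitely generated. This contradicts `n ≥ 2`: pushing the Fox derivative
`∂/∂xᵢ` forward along `ψ` gives a homomorphism `ker ψ → ℤ[t, t⁻¹]` which intertwines conjugation
by `g` with multiplication by `t^ψ(g)`. On a finitely generated `ker ψ` its values have supports in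
a fixed finite set, but conjugates of the commutator `[xᵢ, xⱼ]` with `ψ(xⱼ) ≠ 0` have value
`t^k (1 - t^ψ(xⱼ))` for every `k`.
-/

open Function Multiplicative SemidirectProduct LaurentPolynomial
open scoped commutatorElement

theorem Subgroup.FG.map {G H : Type*} [Group G] [Group H] {K : Subgroup G} (hK : K.FG)
    (f : G →* H) : (K.map f).FG := by
  classical
  obtain ⟨S, rfl⟩ := hK
  exact ⟨S.image f, by rw [Finset.coe_image, MonoidHom.map_closure]⟩

theorem FreeGroup.surjective_lift_ofAdd_single {ι : Type*} [Fintype ι] [DecidableEq ι] :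
    Surjective (FreeGroup.lift fun i : ι => ofAdd (Pi.single i (1 : ℤ))) := by
  intro x
  rw [← MonoidHom.mem_range, ← ofAdd_toAdd x, ← Finset.univ_sum_single x.toAdd, ofAdd_sum]
  refine Subgroup.prod_mem _ fun i _ => ⟨FreeGroup.of i ^ x.toAdd i, ?_⟩
  rw [map_zpow, FreeGroup.lift_apply_of, ← ofAdd_zsmul, ← Pi.single_smul', smul_eq_mul, mul_one]

theorem isOfFinOrder_of_map_eq_one {A M T : Type*} [Group A] [AddCommGroup M] [Module.Finite ℤ M]
    [IsAddTorsionFree M] [Group T] [Finite T] (e : A ≃* Multiplicative M × T)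
    {f : A →* Multiplicative M} (hf : Surjective f) {a : A} (ha : f a = 1) : IsOfFinOrder a := by
  set ι : T →* A := e.symm.toMonoidHom.comp (MonoidHom.inr _ T)
  set β := f.comp (e.symm.toMonoidHom.comp (MonoidHom.inl _ T))
  have hfβ : ∀ x, f x = β (e x).1 := fun x => by
    have hfι : f (ι (e x).2) = 1 :=
      (f.isOfFinOrder (ι.isOfFinOrder (isOfFinOrder_of_finite _))).eq_one'
    conv_lhs => rw [← e.symm_apply_apply x, ← Prod.fst_mul_snd (e x), map_mul, map_mul]
    exact mul_eq_left.2 hfι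
  have hβ : Surjective β := fun y =>
    let ⟨x, hx⟩ := hf y
    ⟨(e x).1, (hfβ x).symm.trans hx⟩
  have hβ_inj : Injective β :=
    OrzechProperty.injective_of_surjective_endomorphism
      (AddMonoidHom.toMultiplicative.symm β).toIntLinearMap hβ
  have ha₁ : (e a).1 = 1 := hβ_inj (by rw [← hfβ, ha, map_one])
  have ha_eq : a = ι (e a).2 := e.eq_symm_apply.2 (Prod.ext ha₁ rfl)
  exact ha_eq ▸ ι.isOfFinOrder (isOfFinOrder_of_finite _)

theorem exists_comp_eq_of_abelianization_mulEquiv {G H M T C : Type*} [Group G] [Group H]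
    [AddCommGroup M] [Module.Finite ℤ M] [IsAddTorsionFree M] [CommGroup T] [Finite T]
    [CommGroup C] [IsMulTorsionFree C] (e : Abelianization G ≃* Multiplicative M × T)
    {θ : G →* H} (hθ : Surjective θ) {p : H →* Multiplicative M} (hp : Surjective p)
    (χ : G →* C) : ∃ ψ : H →* C, ψ.comp θ = χ := by
  have hker : θ.ker ≤ χ.ker := fun g hg => by
    have hf : Surjective (Abelianization.lift (p.comp θ)) := fun y => by
      obtain ⟨h, rfl⟩ := hp y
      obtain ⟨g, rfl⟩ := hθ h
      exact ⟨Abelianization.of g, Abelianization.lift_apply_of _ _⟩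
    have hg_tors : IsOfFinOrder (Abelianization.of g) :=
      isOfFinOrder_of_map_eq_one e hf (by simp [MonoidHom.mem_ker.1 hg])
    rw [MonoidHom.mem_ker, ← Abelianization.lift_apply_of χ]
    exact ((Abelianization.lift χ).isOfFinOrder hg_tors).eq_one'
  exact ⟨θ.liftOfSurjective hθ ⟨χ, hker⟩, θ.liftOfRightInverse_comp _ _ _⟩

theorem SemidirectProduct.mul_inl_mul_inv {N G : Type*} [CommGroup N] [Group G]
    {φ : G →* MulAut N} (q : N ⋊[φ] G) (n : N) : q * inl n * q⁻¹ = inl (φ q.right n) := by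
  rw [← inl_left_mul_inr_right q, mul_inv_rev, ← mul_assoc, mul_assoc _ (inr _), inl_aut]
  ext <;> simp [mul_comm]

theorem SemidirectProduct.exists_support_subset_of_fg {R ι G : Type*} [Ring R] [Group G]
    {φ : G →* MulAut (Multiplicative (AddMonoidAlgebra R ι))}
    {K : Subgroup (Multiplicative (AddMonoidAlgebra R ι) ⋊[φ] G)} (hK : K.FG)
    (hKr : K ≤ rightHom.ker) : ∃ M : Finset ι, ∀ q ∈ K, (toAdd q.left).coeff.support ⊆ M := by
  classical
  obtain ⟨S, rfl⟩ := hK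
  refine ⟨S.biUnion fun s => (toAdd s.left).coeff.support, fun q hq => ?_⟩
  induction hq using Subgroup.closure_induction with
  | mem s hs => exact Finset.subset_biUnion_of_mem (fun s => (toAdd s.left).coeff.support) hs
  | one => simp
  | mul x y hx _ hxM hyM =>
    have hx1 : x.right = 1 := hKr hx
    rw [mul_left, hx1, map_one, MulAut.one_apply, toAdd_mul, AddMonoidAlgebra.coeff_add]
    exact Finsupp.support_add.trans (Finset.union_subset hxM hyM)
  | inv x hx hxM =>
    have hx1 : x.right = 1 := hKr hx
    rwa [inv_left, hx1, inv_one, map_one, MulAut.one_apply, toAdd_inv,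
      AddMonoidAlgebra.coeff_neg, Finsupp.support_neg]

noncomputable def LaurentPolynomial.mulTHom :
    Multiplicative ℤ →* MulAut (Multiplicative ℤ[T;T⁻¹]) :=
  (MulAutMultiplicative ℤ[T;T⁻¹]).symm.toMonoidHom.comp
    ((DistribMulAction.toAddAut ℤ[T;T⁻¹]ˣ ℤ[T;T⁻¹]).comp (AddMonoidAlgebra.of ℤ ℤ).toHomUnits)

theorem LaurentPolynomial.toAdd_mulTHom_apply (k : Multiplicative ℤ)
    (x : Multiplicative ℤ[T;T⁻¹]) :
    toAdd (mulTHom k x) = T k.toAdd * x.toAdd := rfl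

/-- The wreath product `ℤ ≀ ℤ`, with base group `ℤ[ℤ] = ℤ[t, t⁻¹]`. -/
abbrev IntWreathInt := Multiplicative ℤ[T;T⁻¹] ⋊[mulTHom] Multiplicative ℤ

namespace FreeGroup

section foxHom

variable {α : Type*} [DecidableEq α] (ψ : FreeGroup α →* Multiplicative ℤ)

/-- `(foxHom ψ i w).left` is the image of the Fox derivative `∂w/∂xᵢ` in `ℤ[t, t⁻¹]`. -/
noncomputable def foxHom (i : α) : FreeGroup α →* IntWreathInt :=
  FreeGroup.lift fun l => inl (ofAdd (if l = i then 1 else 0)) * inr (ψ (of l))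

theorem rightHom_comp_foxHom (i : α) : rightHom.comp (foxHom ψ i) = ψ :=
  ext_hom _ _ fun l => by simp [foxHom]

theorem foxHom_commutatorElement {i j : α} (hij : i ≠ j) :
    foxHom ψ i ⁅(of i : FreeGroup α), of j⁆ =
      inl (ofAdd (1 - T (ψ (of j)).toAdd)) := by
  set a := ψ (of i)
  set b := ψ (of j)
  set u : Multiplicative ℤ[T;T⁻¹] := ofAdd 1
  have hi : foxHom ψ i (of i) = inl u * inr a := by simp [foxHom, a, u]
  have hj : foxHom ψ i (of j) = inr b := by simp [foxHom, hij.symm, b]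
  have hab : (inr a * inr b * (inr a)⁻¹ : IntWreathInt) = inr b := by
    rw [← _root_.map_inv, ← _root_.map_mul, ← _root_.map_mul, mul_comm a b, mul_inv_cancel_right]
  calc foxHom ψ i ⁅of i, of j⁆
      = inl u * (inr a * inr b * (inr a)⁻¹) * (inl u)⁻¹ * (inr b)⁻¹ := by
        simp only [commutatorElement_def, _root_.map_mul, _root_.map_inv, hi, hj, mul_inv_rev,
          mul_assoc]
    _ = inl u * inl (mulTHom b u⁻¹) := by
        rw [hab, inl_aut, _root_.map_inv, _root_.map_inv]
        group
    _ = inl (ofAdd (1 - T b.toAdd)) := by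
        rw [← _root_.map_mul]
        congr 1
        apply toAdd.injective
        rw [toAdd_mul, toAdd_mulTHom_apply, toAdd_inv, toAdd_ofAdd, mul_neg, mul_one,
          ← sub_eq_add_neg, toAdd_ofAdd]

end foxHom

theorem not_fg_ker_of_surjective {α : Type*} [Nontrivial α]
    (ψ : FreeGroup α →* Multiplicative ℤ) (hψ : Surjective ψ) : ¬ ψ.ker.FG := by
  classical
  intro hfg
  obtain ⟨j, hj⟩ : ∃ j, ψ (of j) ≠ 1 := by
    by_contra! h
    obtain ⟨w, hw⟩ := hψ (ofAdd 1)
    rw [ext_hom ψ 1 h, MonoidHom.one_apply] at hw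
    exact one_ne_zero (congrArg toAdd hw).symm
  obtain ⟨i, hij⟩ := exists_ne j
  set Φ := foxHom ψ i
  have hKr : ψ.ker.map Φ ≤ rightHom.ker := by
    rw [Subgroup.map_le_iff_le_comap, MonoidHom.comap_ker, rightHom_comp_foxHom]
  obtain ⟨M, hM⟩ := exists_support_subset_of_fg (hfg.map Φ) hKr
  obtain ⟨k, hk⟩ := Infinite.exists_notMem_finset M
  obtain ⟨g, hg⟩ := hψ (ofAdd k)
  have hcomm : ⁅(of i : FreeGroup α), of j⁆ ∈ ψ.ker := by
    rw [MonoidHom.mem_ker, map_commutatorElement, commutatorElement_eq_one_iff_mul_comm]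
    exact mul_comm _ _
  have hconj := Subgroup.mem_map_of_mem Φ (ψ.normal_ker.conj_mem _ hcomm g)
  rw [_root_.map_mul, _root_.map_mul, _root_.map_inv, foxHom_commutatorElement ψ hij,
    mul_inl_mul_inv] at hconj
  refine hk (hM _ hconj (Finsupp.mem_support_iff.2 ?_))
  have hb : (ψ (of j)).toAdd ≠ 0 := hj
  have hgr : (Φ g).right = ofAdd k := by
    rw [← hg, ← rightHom_eq_right, ← MonoidHom.comp_apply, rightHom_comp_foxHom]
  rw [hgr, left_inl, toAdd_mulTHom_apply, toAdd_ofAdd, toAdd_ofAdd, T,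
    AddMonoidAlgebra.coeff_single_mul_apply, neg_add_cancel]
  simp [hb]

end FreeGroup

theorem stmt_9_general {G : Type*} [Group G] (n : ℕ) (hn : 2 ≤ n)
    (T : Type*) [CommGroup T] [Finite T]
    (e : Abelianization G ≃* Multiplicative (Fin n → ℤ) × T)
    (χ : G →* Multiplicative ℤ) (hχ : Function.Surjective χ)
    (hker : χ.ker.FG) :
    ¬ ∃ θ : G →* FreeGroup (Fin n), Function.Surjective θ := by
  rintro ⟨θ, hθ⟩
  have : Nontrivial (Fin n) := Fin.nontrivial_iff_two_le.2 hn
  obtain ⟨ψ, hψ⟩ := exists_comp_eq_of_abelianization_mulEquiv e hθ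
    FreeGroup.surjective_lift_ofAdd_single χ
  have hψ_surj : Surjective ψ := by
    rw [← hψ, MonoidHom.coe_comp] at hχ
    exact hχ.of_comp
  have hψ_ker : ψ.ker = χ.ker.map θ := by
    rw [← hψ, ← MonoidHom.comap_ker, Subgroup.map_comap_eq_self_of_surjective hθ]
  exact FreeGroup.not_fg_ker_of_surjective ψ hψ_surj (hψ_ker ▸ hker.map θ)

/-- A fibred group (surjection to ℤ with f.g. kernel) with first Betti
number n ≥ 2 cannot surject onto the free group of rank n. -/
theorem stmt_9 {G : Type*} [Group G] [Group.FG G] (n : ℕ) (hn : 2 ≤ n)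
    (T : Type*) [CommGroup T] [Finite T]
    (e : Abelianization G ≃* Multiplicative (Fin n → ℤ) × T)
    (χ : G →* Multiplicative ℤ) (hχ : Function.Surjective χ)
    (hker : χ.ker.FG) :
    ¬ ∃ θ : G →* FreeGroup (Fin n), Function.Surjective θ :=
  stmt_9_general n hn T e χ hχ hker
end

section
/- For n ≥ 2, no surjective homomorphism from the free group F_n onto ℤ has finitely generated kernel. (Equivalently, the BNS invariant of a nonabelian free group of finite rank is empty.) -/
/-!
Send `F` to the wreath product `ℤ[t,t⁻¹] ⋊ ℤ` by `xₖ ↦ (δᵢₖ, χ xₖ)`, a lift of `χ`. On `K = ker χ`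
the first coordinate is a homomorphism to `ℤ[t,t⁻¹]` (a Fox derivative); its image is stable under
multiplication by every power of `t`, since conjugating by `u` multiplies by `t ^ χ u`, and it
contains `1 - t ^ χ xⱼ ≠ 0`, the image of the commutator `[xᵢ, xⱼ]`. The supports of the elements
of a finitely generated subgroup of `ℤ[t,t⁻¹]` all lie in one finite set of exponents, which
multiplication by powers of `t` escapes; so `K` is not finitely generated.
-/

open LaurentPolynomial SemidirectProduct

namespace LaurentPolynomial

variable {R : Type*} [Ring R]

theorem support_subset_of_mem_closure {S : Finset R[T;T⁻¹]} {f : R[T;T⁻¹]}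
    (hf : f ∈ AddSubgroup.closure (S : Set R[T;T⁻¹])) :
    f.coeff.support ⊆ S.sup fun g ↦ g.coeff.support := by
  induction hf using AddSubgroup.closure_induction with
  | mem g hg => exact Finset.le_sup (f := fun g : R[T;T⁻¹] ↦ g.coeff.support) hg
  | zero => simp
  | add g h _ _ hg hh =>
    rw [AddMonoidAlgebra.coeff_add]
    exact Finsupp.support_add.trans (Finset.union_subset hg hh)
  | neg g _ hg => rwa [AddMonoidAlgebra.coeff_neg, Finsupp.support_neg]

theorem not_fg_of_T_mul_mem {M : AddSubgroup R[T;T⁻¹]} (hM : M ≠ ⊥)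
    (hT : ∀ m : ℤ, ∀ f ∈ M, T m * f ∈ M) : ¬ M.FG := by
  obtain ⟨f, hfM, hf⟩ := M.bot_or_exists_ne_zero.resolve_left hM
  rintro ⟨S, rfl⟩
  obtain ⟨d, hd⟩ := Finsupp.support_nonempty_iff.2 (AddMonoidAlgebra.coeff_eq_zero.not.2 hf)
  obtain ⟨m, hm⟩ := Infinite.exists_notMem_finset (S.sup fun g ↦ g.coeff.support)
  refine hm (support_subset_of_mem_closure (hT (m - d) f hfM) ?_)
  rw [Finsupp.mem_support_iff] at hd ⊢
  rw [T, AddMonoidAlgebra.coeff_single_mul_apply]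
  simpa using hd

theorem T_inj [Nontrivial R] {m n : ℤ} : (T m : R[T;T⁻¹]) = T n ↔ m = n :=
  AddMonoidAlgebra.single_left_inj one_ne_zero

noncomputable def shiftAut : Multiplicative ℤ →* MulAut (Multiplicative R[T;T⁻¹]) where
  toFun m := AddEquiv.toMultiplicative
    (Multiplicative.toAdd (AddAut.mulLeft (isUnit_T m.toAdd).unit))
  map_one' := by
    ext f : 1
    show Multiplicative.ofAdd (T 0 * f.toAdd) = f
    rw [T_zero, one_mul]
    rfl
  map_mul' a b := by
    ext f : 1
    show Multiplicative.ofAdd (T (a.toAdd + b.toAdd) * f.toAdd)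
      = .ofAdd (T a.toAdd * (T b.toAdd * f.toAdd))
    rw [T_add, mul_assoc]

@[simp]
theorem shiftAut_apply (m : Multiplicative ℤ) (f : Multiplicative R[T;T⁻¹]) :
    shiftAut m f = .ofAdd (T m.toAdd * f.toAdd) := rfl

end LaurentPolynomial

namespace SemidirectProduct

variable {N G H : Type*} [Group G] [Group H]

def leftOnKer [Group N] {φ : G →* MulAut N} (ψ : H →* N ⋊[φ] G) :
    (rightHom.comp ψ).ker →* N where
  toFun h := (ψ h).left
  map_one' := by simp
  map_mul' a b := by
    have ha : (ψ a).right = 1 := a.2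
    simp [mul_left, ha]

theorem mul_mul_inv_left_of_right_eq_one [CommGroup N] {φ : G →* MulAut N} (x y : N ⋊[φ] G)
    (hy : y.right = 1) : (x * y * x⁻¹).left = φ x.right y.left := by
  simp [mul_left, inv_left, hy, mul_right]

end SemidirectProduct

theorem LaurentPolynomial.not_fg_ker_of_left_ne_one {G R : Type*} [Group G] [Ring R]
    (ψ : G →* Multiplicative R[T;T⁻¹] ⋊[shiftAut] Multiplicative ℤ)
    (hψ : Function.Surjective (rightHom.comp ψ)) {g : G} (hg : g ∈ (rightHom.comp ψ).ker)
    (hψg : (ψ g).left ≠ 1) : ¬ (rightHom.comp ψ).ker.FG := by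
  intro hK
  have : Group.FG (rightHom.comp ψ).ker := (Group.fg_iff_subgroup_fg _).2 hK
  apply not_fg_of_T_mul_mem (M := Subgroup.toAddSubgroup' (leftOnKer ψ).range)
  · intro hbot
    have hmem : (ψ g).left.toAdd ∈ Subgroup.toAddSubgroup' (leftOnKer ψ).range := ⟨⟨g, hg⟩, rfl⟩
    rw [hbot, AddSubgroup.mem_bot] at hmem
    exact hψg hmem
  · rintro m _ ⟨k, rfl⟩
    obtain ⟨u, hu : (ψ u).right = .ofAdd m⟩ := hψ (.ofAdd m)
    refine ⟨⟨u * k * u⁻¹, Subgroup.Normal.conj_mem inferInstance k.1 k.2 u⟩, ?_⟩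
    show (ψ (u * k * u⁻¹)).left = _
    rw [map_mul, map_mul, map_inv, mul_mul_inv_left_of_right_eq_one _ _ k.2, shiftAut_apply, hu]
    rfl
  · rw [AddSubgroup.fg_iff_mul_fg, Subgroup.toAddSubgroup', OrderIso.apply_symm_apply]
    exact (Group.fg_iff_subgroup_fg _).1 inferInstance

theorem FreeGroup.not_fg_ker_of_ne {α : Type*} (χ : FreeGroup α →* Multiplicative ℤ)
    (hχ : Function.Surjective χ) {i j : α} (hij : i ≠ j) (hj : χ (of j) ≠ 1) : ¬ χ.ker.FG := by
  classical
  let ψ : FreeGroup α →* Multiplicative ℤ[T;T⁻¹] ⋊[shiftAut] Multiplicative ℤ :=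
    FreeGroup.lift fun k ↦ ⟨if k = i then .ofAdd 1 else 1, χ (of k)⟩
  have hψ : rightHom.comp ψ = χ := FreeGroup.ext_hom _ _ fun k ↦ by simp [ψ]
  rw [← hψ] at hχ ⊢
  refine not_fg_ker_of_left_ne_one ψ hχ (g := of i * of j * (of i)⁻¹ * (of j)⁻¹) (by simp) ?_
  have hψi : ψ (of i) = ⟨.ofAdd 1, χ (of i)⟩ := by simp [ψ]
  have hψj : ψ (of j) = ⟨1, χ (of j)⟩ := by simp [ψ, hij.symm]
  have hleft : (ψ (of i * of j * (of i)⁻¹ * (of j)⁻¹)).left = .ofAdd (1 - T (χ (of j)).toAdd) := by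
    rw [_root_.map_mul, _root_.map_mul, _root_.map_mul, _root_.map_inv, _root_.map_inv, hψi, hψj]
    apply Multiplicative.toAdd.injective
    simp only [mul_left, inv_left, mul_right, inv_right, shiftAut_apply, toAdd_mul, toAdd_ofAdd,
      toAdd_inv, toAdd_one, mul_zero, neg_zero, add_zero, mul_neg, mul_one, ← T_add,
      add_neg_cancel_comm, sub_eq_add_neg]
  rw [hleft, Ne, ofAdd_eq_one, sub_eq_zero, ← T_zero, T_inj]
  exact fun h ↦ hj (toAdd_eq_zero.1 h.symm)

theorem FreeGroup.not_fg_ker_of_surjective_s12 {α : Type*} [Nontrivial α]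
    (χ : FreeGroup α →* Multiplicative ℤ) (hχ : Function.Surjective χ) : ¬ χ.ker.FG := by
  obtain ⟨j, hj⟩ : ∃ j, χ (of j) ≠ 1 := by
    by_contra! h
    have hχ1 : χ = 1 := FreeGroup.ext_hom _ _ h
    obtain ⟨u, hu⟩ := hχ (.ofAdd 1)
    rw [hχ1, MonoidHom.one_apply] at hu
    exact one_ne_zero (ofAdd_eq_one.1 hu.symm)
  obtain ⟨i, hi⟩ := exists_ne j
  exact not_fg_ker_of_ne χ hχ hi hj

/-- For n ≥ 2 no surjection from the free group Fₙ onto ℤ has finitely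
generated kernel. -/
theorem stmt_12 (n : ℕ) (hn : 2 ≤ n)
    (χ : FreeGroup (Fin n) →* Multiplicative ℤ)
    (hχ : Function.Surjective χ) : ¬ χ.ker.FG :=
  have : Nontrivial (Fin n) := Fin.nontrivial_iff_two_le.2 hn
  FreeGroup.not_fg_ker_of_surjective_s12 χ hχ
end
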